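/- Let a₁, …, a_N ∈ ℝ and I = {Σ_{i=1}^N θᵢaᵢ : 0 ≤ θᵢ ≤ 1 for 1 ≤ i ≤ N}. Suppose f ∈ C²(ℝ) and f(0) = 0. Then |f(Σ_{i=1}^N aᵢ) − Σ_{i=1}^N f(aᵢ)| ≤ (sup_{x∈I} |f''(x)|) · Σ_{i≠j} |aᵢ aⱼ|. -/

import Mathlib

/-!
For a finite sum `S` and a further summand `b`, `f (S + b) - f S - f b + f 0` is a mixed second
difference of `f` over the parallelogram `{r S + t b : r, t ∈ [0, 1]}`, which lies in `I`; two
applications of the mean value inequality bound it by `sup_I |f''| · |S| · |b|`. Adding the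
summands one at a time, `|S| ≤ Σ |aᵢ|` makes the error bound grow by at most the new terms of
`(Σ |aᵢ|)² - Σ |aᵢ|² = Σ_{i ≠ j} |aᵢ aⱼ|`.
-/

open Set

variable {E : Type*} [NormedAddCommGroup E] [NormedSpace ℝ E]

theorem hasDerivAt_comp_mul_add {g : ℝ → E} (hg : Differentiable ℝ g) (u v r : ℝ) :
    HasDerivAt (fun r => g (r * u + v)) (u • deriv g (r * u + v)) r := by
  have : HasDerivAt (fun r : ℝ => r * u + v) u r := by
    simpa using ((hasDerivAt_id r).mul_const u).add_const v
  exact (hg _).hasDerivAt.scomp r this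

theorem norm_mixed_difference_le {f : ℝ → E} (hf : Differentiable ℝ f)
    (hf' : Differentiable ℝ (deriv f)) {x y M : ℝ}
    (hM : ∀ r ∈ Icc (0 : ℝ) 1, ∀ t ∈ Icc (0 : ℝ) 1, ‖deriv (deriv f) (r * x + t * y)‖ ≤ M) :
    ‖f (x + y) - f x - f y + f 0‖ ≤ M * |x| * |y| := by
  have deriv_sub_le (t : ℝ) (ht : t ∈ Icc (0 : ℝ) 1) :
      ‖deriv f (1 * x + t * y) - deriv f (0 * x + t * y)‖ ≤ M * |x| := by
    refine norm_image_sub_le_of_norm_deriv_le_segment_01'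
      (fun r _ => (hasDerivAt_comp_mul_add hf' x (t * y) r).hasDerivWithinAt) fun r hr => ?_
    rw [norm_smul, Real.norm_eq_abs, mul_comm]
    exact mul_le_mul_of_nonneg_right (hM r (Ico_subset_Icc_self hr) t ht) (abs_nonneg x)
  have outer := norm_image_sub_le_of_norm_deriv_le_segment_01' (C := M * |x| * |y|)
    (f := fun t => f (t * y + 1 * x) - f (t * y + 0 * x))
    (fun t _ => ((hasDerivAt_comp_mul_add hf y _ t).sub
      (hasDerivAt_comp_mul_add hf y _ t)).hasDerivWithinAt) fun t ht => by
    rw [← smul_sub, norm_smul, Real.norm_eq_abs, mul_comm, add_comm (t * y), add_comm (t * y)]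
    exact mul_le_mul_of_nonneg_right (deriv_sub_le t (Ico_subset_Icc_self ht)) (abs_nonneg y)
  convert outer using 2
  simp only [one_mul, zero_mul, add_zero, zero_add]
  rw [add_comm y x]
  abel

theorem Function.update_mem_Icc {ι : Type*} [DecidableEq ι] {α : ι → Type*}
    [∀ i, Preorder (α i)] {x y θ : ∀ i, α i} {j : ι} {t : α j} (hθ : θ ∈ Icc x y)
    (ht : t ∈ Icc (x j) (y j)) : Function.update θ j t ∈ Icc x y := by
  rw [← pi_univ_Icc] at hθ ⊢
  exact (update_mem_pi_iff_of_mem hθ).2 fun _ => ht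

theorem norm_apply_sum_sub_sum_apply_le {ι : Type*} [DecidableEq ι] {f : ℝ → E}
    (hf : Differentiable ℝ f) (hf' : Differentiable ℝ (deriv f)) (hf0 : f 0 = 0)
    (a : ι → ℝ) (s : Finset ι) {M : ℝ}
    (hM : ∀ θ ∈ Icc (0 : ι → ℝ) 1, ‖deriv (deriv f) (∑ i ∈ s, θ i * a i)‖ ≤ M) :
    ‖f (∑ i ∈ s, a i) - ∑ i ∈ s, f (a i)‖ ≤
      M * ((∑ i ∈ s, |a i|) ^ 2 - ∑ i ∈ s, |a i| ^ 2) := by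
  induction s using Finset.induction_on with
  | empty => simp [hf0]
  | insert j s hj ih =>
    have sum_update (θ : ι → ℝ) (t : ℝ) :
        ∑ i ∈ insert j s, Function.update θ j t i * a i = t * a j + ∑ i ∈ s, θ i * a i := by
      rw [Finset.sum_insert hj, Function.update_self]
      congr 1
      exact Finset.sum_congr rfl fun i hi => by
        rw [Function.update_of_ne (ne_of_mem_of_not_mem hi hj)]
    have hM_s : ∀ θ ∈ Icc (0 : ι → ℝ) 1, ‖deriv (deriv f) (∑ i ∈ s, θ i * a i)‖ ≤ M := by
      intro θ hθ
      simpa [sum_update] using hM _ (Function.update_mem_Icc (j := j) hθ ⟨le_rfl, zero_le_one⟩)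
    have hM_box : ∀ r ∈ Icc (0 : ℝ) 1, ∀ t ∈ Icc (0 : ℝ) 1,
        ‖deriv (deriv f) (r * ∑ i ∈ s, a i + t * a j)‖ ≤ M := by
      intro r hr t ht
      have hconst : (fun _ => r : ι → ℝ) ∈ Icc 0 1 := ⟨fun _ => hr.1, fun _ => hr.2⟩
      simpa [sum_update, Finset.mul_sum, add_comm] using
        hM _ (Function.update_mem_Icc (j := j) hconst ht)
    have hM0 : 0 ≤ M :=
      (norm_nonneg _).trans (hM_box 0 ⟨le_rfl, zero_le_one⟩ 0 ⟨le_rfl, zero_le_one⟩)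
    set S := ∑ i ∈ s, a i
    set A := ∑ i ∈ s, |a i|
    have hSA : |S| ≤ A := Finset.abs_sum_le_sum_abs _ _
    simp only [Finset.sum_insert hj]
    calc ‖f (a j + S) - (f (a j) + ∑ i ∈ s, f (a i))‖
        = ‖(f (S + a j) - f S - f (a j) + f 0) + (f S - ∑ i ∈ s, f (a i))‖ := by
          rw [hf0, add_comm S]; congr 1; abel
      _ ≤ M * |S| * |a j| + M * (A ^ 2 - ∑ i ∈ s, |a i| ^ 2) :=
          norm_add_le_of_le (norm_mixed_difference_le hf hf' hM_box) (ih hM_s)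
      _ ≤ M * ((|a j| + A) ^ 2 - (|a j| ^ 2 + ∑ i ∈ s, |a i| ^ 2)) := by
          have hMa : 0 ≤ M * |a j| := mul_nonneg hM0 (abs_nonneg (a j))
          nlinarith [mul_le_mul_of_nonneg_left hSA hMa, mul_nonneg hMa ((abs_nonneg S).trans hSA)]

theorem Finset.sum_sum_filter_ne_mul {ι R : Type*} [CommRing R] [DecidableEq ι] (s : Finset ι)
    (b : ι → R) :
    ∑ i ∈ s, ∑ j ∈ s.filter (· ≠ i), b i * b j = (∑ i ∈ s, b i) ^ 2 - ∑ i ∈ s, b i ^ 2 := by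
  simp_rw [Finset.filter_ne', sq, Finset.sum_mul_sum]
  rw [← Finset.sum_sub_distrib]
  exact Finset.sum_congr rfl fun i hi => Finset.sum_erase_eq_sub hi

/-- Claim A.3: if `f ∈ C²(ℝ)` and `f(0) = 0`, then
`|f(Σᵢ aᵢ) − Σᵢ f(aᵢ)| ≤ (sup_{x∈I} |f''(x)|) Σ_{i≠j} |aᵢ aⱼ|`,
where `I = {Σᵢ θᵢ aᵢ : θ ∈ [0,1]^N}`. -/
theorem abs_f_sum_sub_sum_f_le
    (N : ℕ) (a : Fin N → ℝ) (f : ℝ → ℝ) (hf : ContDiff ℝ 2 f) (hf0 : f 0 = 0) :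
    |f (∑ i : Fin N, a i) - ∑ i : Fin N, f (a i)|
      ≤ sSup ((fun x => |iteratedDeriv 2 f x|) ''
            ((fun θ : Fin N → ℝ => ∑ i : Fin N, θ i * a i) ''
              Set.Icc (0 : Fin N → ℝ) 1))
        * ∑ i : Fin N, ∑ j ∈ Finset.univ.filter (fun j : Fin N => j ≠ i),
            |a i * a j| := by
  have hf' : Differentiable ℝ (deriv f) := by
    simpa [iteratedDeriv_one] using hf.differentiable_iteratedDeriv 1 (by norm_num)
  have hf'' : iteratedDeriv 2 f = deriv (deriv f) := by
    rw [iteratedDeriv_succ, iteratedDeriv_one]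
  have hI : IsCompact ((fun θ : Fin N → ℝ => ∑ i, θ i * a i) '' Icc 0 1) :=
    isCompact_Icc.image (by fun_prop)
  have hbdd := (hI.image (hf.continuous_iteratedDeriv 2 le_rfl).abs).bddAbove
  simp_rw [abs_mul, Finset.sum_sum_filter_ne_mul]
  refine norm_apply_sum_sub_sum_apply_le (hf.differentiable two_ne_zero) hf' hf0 a _
    fun θ hθ => ?_
  rw [Real.norm_eq_abs, ← hf'']
  exact le_csSup hbdd ⟨_, ⟨θ, hθ, rfl⟩, rfl⟩
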